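/- For the eigenvalue sequence of the geometric Dirac operator on U(2)/U_q(2): the eigenvalues of D̂² are n_{j,c}² = (2j+3/2)² + c² with multiplicities m_{j,c} polynomial in j (at most C(2j+1)² for fixed c, and c ranges over a set of size O(Λ) with |c| ≤ Λ). Then the counting function N(Λ) = ∑_{(j,c): n_{j,c} ≤ Λ} m_{j,c} satisfies N(Λ) = O(Λ⁴) and N(Λ) ≥ c₀Λ⁴ for large Λ, where the multiplicities are m^↑_{j,c} = 2(2j+2)(2j+1) and m^↓_{j,c} = 2·2j(2j+1) and c ranges over half-integers with j+c ∈ ℤ... concretely: ∑ over half-integers j ≥ 0 and compatible c with √((2j+3/2)²+c²) ≤ Λ of [2(2j+2)(2j+1) + 2·2j(2j+1)] is bounded above and below by positive constant multiples of Λ⁴ for Λ ≥ 2. -/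
import Mathlib


/-- The eigenvalue counting function for the geometric Dirac operator on `U_q(2)`:
`j = n/2` ranges over half-integers, `c = k + (n mod 2)/2` over half-integers with
`j + c ∈ ℤ`, and the eigenvalue `n_{j,c} = √((2j+3/2)² + c²)` has total multiplicity
`2(2j+2)(2j+1) + 2·2j(2j+1)`. -/
noncomputable def countingUq2 (Λ : ℝ) : ℝ :=
  ∑' p : ℕ × ℤ,
    (if Real.sqrt (((p.1 : ℝ) + 3 / 2) ^ 2 + ((p.2 : ℝ) + ((p.1 % 2 : ℕ) : ℝ) / 2) ^ 2) ≤ Λ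
      then (2 * ((p.1 : ℝ) + 2) * ((p.1 : ℝ) + 1) + 2 * (p.1 : ℝ) * ((p.1 : ℝ) + 1))
      else 0)

private lemma auxsq (Λ a : ℝ) (h : Real.sqrt a ≤ Λ) (ha : 0 ≤ a) : a ≤ Λ ^ 2 := by
  nlinarith [Real.sq_sqrt ha, Real.sqrt_nonneg a]

private lemma auxn (Λ a b : ℝ) (h : a^2 + b^2 ≤ Λ^2) (ha : 0 ≤ a) (hΛ : 0 ≤ Λ) : a ≤ Λ := by
  nlinarith [sq_nonneg b]

private lemma auxc (Λ a b : ℝ) (h : a^2 + b^2 ≤ Λ^2) (hΛ : 0 ≤ Λ) : -Λ ≤ b ∧ b ≤ Λ := by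
  constructor <;> nlinarith [sq_nonneg a]

private lemma aux1 (Λ x y e : ℝ) (h16 : 16 < Λ) (hx2 : x ≤ Λ/4) (hx0 : 0 ≤ x)
    (hy1 : 0 ≤ y) (hy2 : y ≤ Λ/8) (he0 : 0 ≤ e) (he1 : e ≤ 1) :
    (x + 3/2)^2 + (y + e/2)^2 ≤ Λ^2 := by nlinarith

private lemma aux2 (Λ x : ℝ) (h16 : 16 < Λ) (hx : Λ/8 < x + 1) (hx0 : 0 ≤ x) :
    Λ^2/32 ≤ 2*(x+2)*(x+1) + 2*x*(x+1) := by nlinarith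

private lemma aux3 (Λ m s : ℝ) (h16 : 16 < Λ) (hm : Λ/8 < m + 1) (hm0 : 0 ≤ m)
    (hs : (m+1)*(m+1)*(Λ^2/32) ≤ s) : 1/65536*Λ^4 ≤ s := by
  have hΛ4 : 0 ≤ Λ^4 := by positivity
  have h1 : (Λ/8)^2 ≤ (m+1)^2 := by nlinarith
  have h2 : (Λ/8)^2 * (Λ^2/32) ≤ (m+1)^2 * (Λ^2/32) :=
    mul_le_mul_of_nonneg_right h1 (by positivity)
  have h3 : (Λ/8)^2 * (Λ^2/32) = Λ^4/2048 := by ring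
  have h4 : (m+1)^2 * (Λ^2/32) = (m+1)*(m+1)*(Λ^2/32) := by ring
  linarith

private lemma aux4 (Λ n : ℝ) (h2 : 2 ≤ Λ) (hn : n + 3/2 ≤ Λ) (hn0 : 0 ≤ n) :
    2*(n+2)*(n+1)+2*n*(n+1) ≤ 16*Λ^2 := by nlinarith

private lemma aux5 (Λ N : ℝ) (h2 : 2 ≤ Λ) (hN : N ≤ Λ) (hN0 : 0 ≤ N) :
    (N+1)*(2*N+3)*(16*Λ^2) ≤ 128*Λ^4 := by
  have h1 : (N+1)*(2*N+3) ≤ 8*Λ^2 := by nlinarith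
  calc (N+1)*(2*N+3)*(16*Λ^2) ≤ 8*Λ^2*(16*Λ^2) :=
        mul_le_mul_of_nonneg_right h1 (by positivity)
    _ = 128*Λ^4 := by ring

private lemma aux6 (Λ : ℝ) (h0 : 0 ≤ Λ) (h16 : Λ ≤ 16) : 1/65536*Λ^4 ≤ 4 := by
  have h := pow_le_pow_left₀ h0 h16 4
  norm_num at h
  linarith

set_option maxHeartbeats 1000000 in
/-- the counting function of `|D̂_q|` on `U_q(2)` grows like `Λ⁴`. -/
theorem countingUq2_quartic_growth :
    ∃ c₀ C : ℝ, 0 < c₀ ∧ 0 < C ∧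
      ∀ Λ : ℝ, 2 ≤ Λ → c₀ * Λ ^ 4 ≤ countingUq2 Λ ∧ countingUq2 Λ ≤ C * Λ ^ 4 := by
  refine ⟨1/65536, 128, by norm_num, by norm_num, fun Λ hΛ => ?_⟩
  have hΛ0 : (0:ℝ) ≤ Λ := by linarith
  set f : ℕ × ℤ → ℝ := fun p =>
    if Real.sqrt (((p.1 : ℝ) + 3 / 2) ^ 2 + ((p.2 : ℝ) + ((p.1 % 2 : ℕ) : ℝ) / 2) ^ 2) ≤ Λ
      then (2 * ((p.1 : ℝ) + 2) * ((p.1 : ℝ) + 1) + 2 * (p.1 : ℝ) * ((p.1 : ℝ) + 1))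
      else 0 with hf
  have hcount : countingUq2 Λ = ∑' p, f p := rfl
  have heps0 : ∀ n : ℕ, (0:ℝ) ≤ ((n % 2 : ℕ) : ℝ) := fun n => by positivity
  have heps1 : ∀ n : ℕ, ((n % 2 : ℕ) : ℝ) ≤ 1 := fun n => by
    have : n % 2 ≤ 1 := by omega
    exact_mod_cast this
  have hfnn : ∀ p, 0 ≤ f p := by
    intro p
    simp only [hf]
    split_ifs
    · positivity
    · exact le_refl 0
  have key : ∀ (n : ℕ) (k : ℤ),
      Real.sqrt (((n : ℝ) + 3 / 2) ^ 2 + ((k : ℝ) + ((n % 2 : ℕ) : ℝ) / 2) ^ 2) ≤ Λ →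
      ((n : ℝ) + 3 / 2) ^ 2 + ((k : ℝ) + ((n % 2 : ℕ) : ℝ) / 2) ^ 2 ≤ Λ ^ 2 :=
    fun n k h => auxsq Λ _ h (by positivity)
  set N : ℕ := ⌊Λ⌋₊ with hN
  have hNle : (N:ℝ) ≤ Λ := Nat.floor_le hΛ0
  have hNgt : Λ < (N:ℝ) + 1 := Nat.lt_floor_add_one Λ
  set S : Finset (ℕ × ℤ) := Finset.range (N+1) ×ˢ Finset.Icc (-(N+1) : ℤ) (N+1) with hS
  have hsupp : ∀ p ∉ S, f p = 0 := by
    rintro ⟨n, k⟩ hp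
    simp only [hf]
    split_ifs with h
    · exfalso
      apply hp
      have hsq := key n k h
      have he0 := heps0 n
      have he1 := heps1 n
      have hn0 : (0:ℝ) ≤ (n:ℝ) := Nat.cast_nonneg n
      have hnΛ : (n:ℝ) + 3/2 ≤ Λ := auxn Λ _ _ hsq (by linarith) hΛ0
      obtain ⟨hclb, hcub⟩ := auxc Λ _ _ hsq hΛ0
      rw [hS, Finset.mem_product, Finset.mem_range, Finset.mem_Icc]
      refine ⟨?_, ?_, ?_⟩
      · have : (n:ℝ) < (N:ℝ) + 1 := by linarith
        exact_mod_cast this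
      · have h2 : ((-(N:ℤ) - 2 : ℤ) : ℝ) < ((k:ℤ) : ℝ) := by push_cast; linarith
        have h3 : (-(N:ℤ) - 2) < k := by exact_mod_cast h2
        omega
      · have h2 : ((k:ℤ):ℝ) < (((N:ℤ) + 1 : ℤ) : ℝ) := by push_cast; linarith
        have h3 : k < (N:ℤ) + 1 := by exact_mod_cast h2
        omega
    · rfl
  have hsum : Summable f := summable_of_ne_finset_zero hsupp
  have htsum : countingUq2 Λ = ∑ p ∈ S, f p := by
    rw [hcount]; exact tsum_eq_sum hsupp
  constructor
  · -- LOWER BOUND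
    rcases le_or_gt Λ 16 with h16 | h16
    · -- small Λ : use the single term at (0,0)
      have h00 : f (0, 0) ≤ countingUq2 Λ := by
        rw [hcount]
        exact Summable.le_tsum hsum (0, 0) (fun j _ => hfnn j)
      have hval : f (0, 0) = 4 := by
        simp only [hf]
        rw [if_pos]
        · norm_num
        · simp only [Nat.cast_zero, Int.cast_zero, Nat.zero_mod]
          have hs : Real.sqrt (((0:ℝ) + 3/2)^2 + ((0:ℝ) + (0:ℝ)/2)^2) = 3/2 := by
            rw [show (((0:ℝ) + 3/2)^2 + ((0:ℝ) + (0:ℝ)/2)^2) = (3/2:ℝ)^2 by ring]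
            exact Real.sqrt_sq (by norm_num)
          rw [hs]; linarith
      have := aux6 Λ hΛ0 h16
      linarith
    · -- large Λ : a block of (m+1)² terms each of size ≥ Λ²/32
      set m : ℕ := ⌊Λ/8⌋₊ with hm
      have hmle : (m:ℝ) ≤ Λ/8 := Nat.floor_le (by linarith)
      have hmgt : Λ/8 < (m:ℝ) + 1 := Nat.lt_floor_add_one _
      set T : Finset (ℕ × ℤ) := Finset.Icc m (2*m) ×ˢ Finset.Icc (0:ℤ) (m:ℤ) with hT
      have hterm : ∀ p ∈ T, Λ^2/32 ≤ f p := by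
        rintro ⟨n, k⟩ hp
        rw [hT, Finset.mem_product, Finset.mem_Icc, Finset.mem_Icc] at hp
        obtain ⟨⟨hn1, hn2⟩, hk1, hk2⟩ := hp
        have hnR1 : (m:ℝ) ≤ (n:ℝ) := by exact_mod_cast hn1
        have hnR2 : (n:ℝ) ≤ 2*(m:ℝ) := by exact_mod_cast hn2
        have hkR1 : (0:ℝ) ≤ (k:ℝ) := by exact_mod_cast hk1
        have hkR2 : (k:ℝ) ≤ (m:ℝ) := by exact_mod_cast hk2
        have he0 := heps0 n
        have he1 := heps1 n
        have hn0 : (0:ℝ) ≤ (n:ℝ) := Nat.cast_nonneg n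
        simp only [hf]
        rw [if_pos]
        · exact aux2 Λ (n:ℝ) h16 (by linarith) hn0
        · have harg := aux1 Λ (n:ℝ) (k:ℝ) ((n % 2 : ℕ) : ℝ) h16 (by linarith) hn0
            hkR1 (by linarith) he0 he1
          calc Real.sqrt (((n : ℝ) + 3 / 2) ^ 2 + ((k : ℝ) + ((n % 2 : ℕ) : ℝ) / 2) ^ 2)
              ≤ Real.sqrt (Λ ^ 2) := Real.sqrt_le_sqrt harg
            _ = Λ := Real.sqrt_sq (by linarith)
      have hTsum : ∑ p ∈ T, f p ≤ countingUq2 Λ := by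
        rw [hcount]
        exact Summable.sum_le_tsum T (fun p _ => hfnn p) hsum
      have hcardle : T.card • (Λ^2/32) ≤ ∑ p ∈ T, f p :=
        Finset.card_nsmul_le_sum T f _ hterm
      have hcardT : T.card = (m+1) * (m+1) := by
        rw [hT, Finset.card_product, Nat.card_Icc, Int.card_Icc]
        have e1 : 2*m+1-m = m+1 := by omega
        have e2 : ((m:ℤ)+1-0).toNat = m+1 := by omega
        rw [e1, e2]
      have hcardR : ((m:ℝ)+1) * ((m:ℝ)+1) * (Λ^2/32) ≤ ∑ p ∈ T, f p := by
        have h1 : (T.card : ℝ) * (Λ^2/32) ≤ ∑ p ∈ T, f p := by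
          rw [← nsmul_eq_mul]; exact hcardle
        rw [hcardT] at h1
        push_cast at h1
        linarith
      exact aux3 Λ (m:ℝ) (countingUq2 Λ) h16 hmgt (Nat.cast_nonneg m)
        (le_trans hcardR hTsum)
  · -- UPPER BOUND
    rw [htsum]
    have hterm : ∀ p ∈ S, f p ≤ 16 * Λ^2 := by
      rintro ⟨n, k⟩ _
      simp only [hf]
      split_ifs with h
      · have hsq := key n k h
        have hn0 : (0:ℝ) ≤ (n:ℝ) := Nat.cast_nonneg n
        have hnΛ : (n:ℝ) + 3/2 ≤ Λ := auxn Λ _ _ hsq (by linarith) hΛ0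
        exact aux4 Λ (n:ℝ) hΛ hnΛ hn0
      · positivity
    have hcardS : S.card = (N+1) * (2*N+3) := by
      rw [hS, Finset.card_product, Finset.card_range, Int.card_Icc]
      have e2 : (((N:ℤ)+1)+1-(-((N:ℤ)+1))).toNat = 2*N+3 := by omega
      rw [e2]
    calc ∑ p ∈ S, f p ≤ S.card • (16 * Λ^2) := Finset.sum_le_card_nsmul S f _ hterm
      _ = (S.card : ℝ) * (16 * Λ^2) := nsmul_eq_mul _ _
      _ = ((N:ℝ)+1) * (2*(N:ℝ)+3) * (16 * Λ^2) := by
          rw [hcardS]; push_cast; ring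
      _ ≤ 128 * Λ^4 := aux5 Λ (N:ℝ) hΛ hNle (Nat.cast_nonneg N)
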